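/- Let M be a 2×2 complex matrix with purely imaginary entries (Re M = 0), det M = -1, and such that M/i is positive definite. Then there exists a Hermitian 2×2 matrix A with trace 0 such that M = e^{A + iπ/2 · I}. -/

import Mathlib

/-!
`I⁻¹ • M` is positive definite with determinant `1`, so it is the exponential of its spectral
logarithm `A`, a Hermitian matrix with `tr A = log det (I⁻¹ • M) = 0`. As `(π / 2) i • 1` is
central, `exp (A + (π / 2) i • 1) = exp A * (i • 1) = M`.
-/

open Matrix
open scoped ComplexOrder

theorem RCLike.exp_ofReal {𝕜 : Type*} [RCLike 𝕜] (x : ℝ) :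
    NormedSpace.exp (x : 𝕜) = (Real.exp x : 𝕜) := by
  rw [Real.exp_eq_exp_ℝ, ← RCLike.algebraMap_eq_ofReal, NormedSpace.algebraMap_exp_comm]

namespace Matrix

variable {n 𝕜 : Type*} [RCLike 𝕜] [Fintype n] [DecidableEq n]

theorem exp_smul_one (c : 𝕜) :
    NormedSpace.exp (c • (1 : Matrix n n 𝕜)) = NormedSpace.exp c • (1 : Matrix n n 𝕜) := by
  rw [smul_one_eq_diagonal, smul_one_eq_diagonal, exp_diagonal, Pi.exp_def]

theorem exp_unitary_conj (U : unitary (Matrix n n 𝕜)) (A : Matrix n n 𝕜) :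
    NormedSpace.exp (U * A * (star U : unitary _)) =
      U * NormedSpace.exp A * (star U : unitary _) :=
  exp_units_conj (Unitary.toUnits U) A

namespace IsHermitian

variable {A : Matrix n n 𝕜} (hA : A.IsHermitian)
include hA

theorem isHermitian_cfc (f : ℝ → ℝ) : (hA.cfc f).IsHermitian := by
  rw [← hA.cfc_eq]
  exact cfc_predicate f A

theorem trace_cfc (f : ℝ → ℝ) : (hA.cfc f).trace = ∑ i, (f (hA.eigenvalues i) : 𝕜) := by
  rw [IsHermitian.cfc, Unitary.conjStarAlgAut_apply, trace_mul_cycle, Unitary.coe_star_mul_self,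
    one_mul, trace_diagonal]
  rfl

theorem exp_cfc (f : ℝ → ℝ) : NormedSpace.exp (hA.cfc f) = hA.cfc (Real.exp ∘ f) := by
  simp only [IsHermitian.cfc, Unitary.conjStarAlgAut_apply]
  rw [← Unitary.coe_star, exp_unitary_conj, exp_diagonal, Pi.exp_def]
  simp only [Function.comp_apply, RCLike.exp_ofReal]
  rfl

end IsHermitian

namespace PosDef

variable {B : Matrix n n 𝕜} (hB : B.PosDef)
include hB

theorem exp_cfc_log : NormedSpace.exp (hB.isHermitian.cfc Real.log) = B := by
  have hexp_log : Real.exp ∘ Real.log ∘ hB.isHermitian.eigenvalues = hB.isHermitian.eigenvalues :=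
    funext fun i => Real.exp_log (hB.eigenvalues_pos i)
  rw [hB.isHermitian.exp_cfc, IsHermitian.cfc, Function.comp_assoc, hexp_log]
  exact hB.isHermitian.spectral_theorem.symm

theorem trace_cfc_log : (hB.isHermitian.cfc Real.log).trace = Real.log (RCLike.re B.det) := by
  rw [hB.isHermitian.trace_cfc, hB.isHermitian.det_eq_prod_eigenvalues, ← RCLike.ofReal_prod,
    RCLike.ofReal_re, Real.log_prod fun i _ => (hB.eigenvalues_pos i).ne', RCLike.ofReal_sum]

end PosDef

end Matrix

theorem purely_imaginary_det_neg_one_eq_exp_general (M : Matrix (Fin 2) (Fin 2) ℂ)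
    (hdet : M.det = -1)
    (hpos : Matrix.PosDef (Complex.I⁻¹ • M)) :
    ∃ A : Matrix (Fin 2) (Fin 2) ℂ, A.IsHermitian ∧ A.trace = 0 ∧
      M = NormedSpace.exp (A + ((Real.pi / 2 : ℂ) * Complex.I) • (1 : Matrix (Fin 2) (Fin 2) ℂ)) := by
  have hdet_div_I : (Complex.I⁻¹ • M).det = 1 := by
    rw [det_smul, hdet, Fintype.card_fin, Complex.inv_I, neg_sq, Complex.I_sq]
    norm_num
  refine ⟨hpos.isHermitian.cfc Real.log, hpos.isHermitian.isHermitian_cfc _, ?_, ?_⟩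
  · rw [hpos.trace_cfc_log, hdet_div_I, RCLike.one_re, Real.log_one, RCLike.ofReal_zero]
  · rw [exp_add_of_commute _ _ ((Commute.one_right _).smul_right _), hpos.exp_cfc_log,
      exp_smul_one, ← Complex.exp_eq_exp_ℂ, Complex.exp_pi_div_two_mul_I, mul_smul_comm, mul_one,
      smul_smul, mul_inv_cancel₀ Complex.I_ne_zero, one_smul]

theorem purely_imaginary_det_neg_one_eq_exp (M : Matrix (Fin 2) (Fin 2) ℂ)
    (hRe : M + Mᴴ = 0) (hdet : M.det = -1)
    (hpos : Matrix.PosDef (Complex.I⁻¹ • M)) :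
    ∃ A : Matrix (Fin 2) (Fin 2) ℂ, A.IsHermitian ∧ A.trace = 0 ∧
      M = NormedSpace.exp (A + ((Real.pi / 2 : ℂ) * Complex.I) • (1 : Matrix (Fin 2) (Fin 2) ℂ)) :=
  purely_imaginary_det_neg_one_eq_exp_general M hdet hpos
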